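/- Let f be tropical meromorphic with tropical characteristic T(r, f) = m(r, f) + N(r, f). Then T(r, f) - T(r, -f) = f(0) for every r > 0. -/

import Mathlib

/-!
Subtracting `(ω b / 2) * |t - b|` for every kink `b ∈ (-r, r)` removes all jumps of the slope
of `f` there, so the difference `V` is affine on `[-r, r]` and `V r + V (-r) = 2 V 0`. Since
`|r - b| + |-r - b| - 2 |b| = 2 (r - |b|)`, this is the tropical Jensen formula
`f r + f (-r) = 2 f 0 + ∑ ω b (r - |b|)`. On the other hand `t⁺ - (-t)⁺ = t` gives
`m(r, f) - m(r, -f) = (f r + f (-r)) / 2`, and since the poles of `-f` are the roots of `f`,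
`N(r, f) - N(r, -f) = -(1/2) ∑ ω b (r - |b|)`.
-/

open Set

/-- `f` is tropical meromorphic: continuous, piecewise linear with one-sided
slopes around every point, and `ω x` is the jump of the derivative at `x`
(right slope minus left slope); the jump points are discrete. -/
structure TropicalMero (f : ℝ → ℝ) (ω : ℝ → ℝ) : Prop where
  cont : Continuous f
  slopes : ∀ x : ℝ, ∃ ε > 0, ∃ sl sr : ℝ,
    (∀ y ∈ Set.Ioc (x - ε) x, f y = f x + sl * (y - x)) ∧
    (∀ y ∈ Set.Ico x (x + ε), f y = f x + sr * (y - x)) ∧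
    sr - sl = ω x
  discrete : ∀ r : ℝ, 0 < r → (Function.support ω ∩ Set.Ioo (-r) r).Finite

/-- Tropical proximity function. -/
noncomputable def mfun (f : ℝ → ℝ) (r : ℝ) : ℝ :=
  (max (f r) 0 + max (f (-r)) 0) / 2

/-- Tropical counting function for poles (points with `ω b < 0`) in `(-r, r)`. -/
noncomputable def Nfun (ω : ℝ → ℝ) (r : ℝ) : ℝ :=
  (1 / 2) * ∑ᶠ b ∈ {b : ℝ | b ∈ Set.Ioo (-r) r ∧ ω b < 0}, (-(ω b)) * (r - |b|)

/-- Tropical characteristic function. -/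
noncomputable def Tfun (f ω : ℝ → ℝ) (r : ℝ) : ℝ := mfun f r + Nfun ω r

open Filter Topology

def EventuallyAffine (l : Filter ℝ) (f : ℝ → ℝ) (x s : ℝ) : Prop :=
  ∀ᶠ y in l, f y = f x + s * (y - x)

namespace EventuallyAffine

variable {l : Filter ℝ} {f g : ℝ → ℝ} {x s t : ℝ}

theorem sub (hf : EventuallyAffine l f x s) (hg : EventuallyAffine l g x t) :
    EventuallyAffine l (fun y => f y - g y) x (s - t) := by
  filter_upwards [hf, hg] with y hfy hgy
  rw [hfy, hgy]
  ring

theorem const_mul (c : ℝ) (hf : EventuallyAffine l f x s) :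
    EventuallyAffine l (fun y => c * f y) x (c * s) := by
  filter_upwards [hf] with y hfy
  rw [hfy]
  ring

theorem finset_sum {ι : Type*} {S : Finset ι} {F : ι → ℝ → ℝ} {σ : ι → ℝ}
    (h : ∀ i ∈ S, EventuallyAffine l (F i) x (σ i)) :
    EventuallyAffine l (fun y => ∑ i ∈ S, F i y) x (∑ i ∈ S, σ i) := by
  filter_upwards [(eventually_all_finset S).2 h] with y hy
  rw [Finset.sum_congr rfl hy, Finset.sum_add_distrib, Finset.sum_mul]

theorem of_nhdsLE_of_nhdsGE (hl : EventuallyAffine (𝓝[≤] x) f x s)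
    (hr : EventuallyAffine (𝓝[≥] x) f x s) : EventuallyAffine (𝓝 x) f x s := by
  rw [EventuallyAffine, ← nhdsLE_sup_nhdsGE]
  exact eventually_sup.2 ⟨hl, hr⟩

theorem hasDerivAt (h : EventuallyAffine (𝓝 x) f x s) : HasDerivAt f s x := by
  have hlin : HasDerivAt (fun y => f x + s * (y - x)) s x := by
    simpa using (((hasDerivAt_id x).sub_const x).const_mul s).const_add (f x)
  exact hlin.congr_of_eventuallyEq h

theorem eventually_nhds (h : EventuallyAffine (𝓝 x) f x s) :
    ∀ᶠ y in 𝓝 x, EventuallyAffine (𝓝 y) f y s := by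
  filter_upwards [Filter.Eventually.eventually_nhds h, h] with y hy hfy
  filter_upwards [hy] with z hfz
  rw [hfz, hfy]
  ring

theorem deriv_eventuallyEq (h : EventuallyAffine (𝓝 x) f x s) :
    deriv f =ᶠ[𝓝 x] fun _ => s :=
  h.eventually_nhds.mono fun _ hy => hy.hasDerivAt.deriv

end EventuallyAffine

theorem eventuallyAffine_abs_sub_nhdsLE (b x : ℝ) :
    EventuallyAffine (𝓝[≤] x) (fun y => |y - b|) x (if x ≤ b then -1 else 1) := by
  split_ifs with hxb
  · filter_upwards [self_mem_nhdsWithin] with y (hy : y ≤ x)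
    rw [abs_of_nonpos (by linarith), abs_of_nonpos (by linarith)]
    ring
  · filter_upwards [nhdsWithin_le_nhds (lt_mem_nhds (not_le.1 hxb))] with y hy
    rw [abs_of_pos (by linarith), abs_of_pos (by linarith)]
    ring

theorem eventuallyAffine_abs_sub_nhdsGE (b x : ℝ) :
    EventuallyAffine (𝓝[≥] x) (fun y => |y - b|) x (if x < b then -1 else 1) := by
  split_ifs with hxb
  · filter_upwards [nhdsWithin_le_nhds (gt_mem_nhds hxb)] with y hy
    rw [abs_of_neg (by linarith), abs_of_neg (by linarith)]
    ring
  · filter_upwards [self_mem_nhdsWithin] with y (hy : x ≤ y)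
    rw [abs_of_nonneg (by linarith), abs_of_nonneg (by linarith)]
    ring

theorem deriv_eq_deriv_of_eventuallyAffine {V : ℝ → ℝ} {U : Set ℝ} (hU : IsOpen U)
    (hU' : IsPreconnected U) (h : ∀ x ∈ U, ∃ s, EventuallyAffine (𝓝 x) V x s) {x y : ℝ}
    (hx : x ∈ U) (hy : y ∈ U) : deriv V x = deriv V y := by
  have hderiv : ∀ z ∈ U, HasDerivAt (deriv V) 0 z := fun z hz => by
    obtain ⟨s, hs⟩ := h z hz
    exact (hasDerivAt_const z s).congr_of_eventuallyEq hs.deriv_eventuallyEq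
  exact hU.is_const_of_deriv_eq_zero hU'
    (fun z hz => (hderiv z hz).differentiableAt.differentiableWithinAt)
    (fun z hz => (hderiv z hz).deriv) hx hy

theorem exists_affine_of_eventuallyAffine {V : ℝ → ℝ} {a b : ℝ}
    (hV : ContinuousOn V (Icc a b))
    (h : ∀ x ∈ Ioo a b, ∃ s, EventuallyAffine (𝓝 x) V x s) :
    ∃ c, ∀ x ∈ Icc a b, V x = V a + c * (x - a) := by
  refine ⟨deriv V ((a + b) / 2), fun x hx => ?_⟩
  rcases hx.1.eq_or_lt with rfl | hax
  · ring
  have hsub : Ioo a x ⊆ Ioo a b := Ioo_subset_Ioo_right hx.2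
  obtain ⟨ξ, hξ, hslope⟩ := exists_deriv_eq_slope V hax (hV.mono (Icc_subset_Icc_right hx.2))
    fun y hy => by
      obtain ⟨s, hs⟩ := h y (hsub hy)
      exact hs.hasDerivAt.differentiableAt.differentiableWithinAt
  have hmid : (a + b) / 2 ∈ Ioo a b := ⟨by linarith [hx.2], by linarith [hx.2]⟩
  rw [deriv_eq_deriv_of_eventuallyAffine isOpen_Ioo isPreconnected_Ioo h hmid (hsub hξ), hslope]
  field_simp
  ring

theorem mfun_sub_mfun_neg (f : ℝ → ℝ) (r : ℝ) :
    mfun f r - mfun (fun x => -f x) r = (f r + f (-r)) / 2 := by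
  simp only [mfun]
  linarith [max_zero_sub_max_neg_zero_eq_self (f r), max_zero_sub_max_neg_zero_eq_self (f (-r))]

theorem Nfun_sub_Nfun_neg {ω : ℝ → ℝ} {r : ℝ} {S : Finset ℝ}
    (hS : ↑S = Function.support ω ∩ Ioo (-r) r) :
    Nfun ω r - Nfun (fun x => -ω x) r = -(1 / 2) * ∑ b ∈ S, ω b * (r - |b|) := by
  have hfilter : ∀ (p : ℝ → Prop) [DecidablePred p], (∀ b, p b → ω b ≠ 0) →
      {b | b ∈ Ioo (-r) r ∧ p b} = ↑(S.filter p) := by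
    intro p _ hp
    ext b
    simp only [mem_ofPred_eq, Finset.coe_filter, ← Finset.mem_coe, hS, mem_inter_iff,
      Function.mem_support]
    exact ⟨fun hb => ⟨⟨hp b hb.2, hb.1⟩, hb.2⟩, fun hb => ⟨hb.1.2, hb.2⟩⟩
  have hterm : ∀ b, ((if ω b < 0 then -ω b * (r - |b|) else 0) -
      if -ω b < 0 then -(-ω b) * (r - |b|) else 0) = -(ω b * (r - |b|)) := by
    intro b
    split_ifs with hneg hpos hpos
    · linarith
    · ring
    · ring
    · rw [show ω b = 0 by linarith]
      ring
  rw [Nfun, Nfun, hfilter _ fun b hb => hb.ne, hfilter _ fun b hb => by linarith,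
    finsum_mem_coe_finset, finsum_mem_coe_finset, Finset.sum_filter, Finset.sum_filter, ← mul_sub,
    ← Finset.sum_sub_distrib, Finset.sum_congr rfl fun b _ => hterm b, Finset.sum_neg_distrib]
  ring

namespace TropicalMero

variable {f ω : ℝ → ℝ}

theorem exists_slopes (h : TropicalMero f ω) (x : ℝ) :
    ∃ s, EventuallyAffine (𝓝[≤] x) f x s ∧
      EventuallyAffine (𝓝[≥] x) f x (s + ω x) := by
  obtain ⟨ε, hε, sl, sr, hl, hr, hjump⟩ := h.slopes x
  refine ⟨sl, mem_of_superset (Ioc_mem_nhdsLE (by linarith)) hl, ?_⟩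
  rw [← hjump, add_sub_cancel]
  exact mem_of_superset (Ico_mem_nhdsGE (by linarith)) hr

theorem exists_eventuallyAffine_sub_kinks (h : TropicalMero f ω) {S : Finset ℝ}
    {x : ℝ} (hx : ω x ≠ 0 → x ∈ S) :
    ∃ s, EventuallyAffine (𝓝 x) (fun y => f y - ∑ b ∈ S, ω b / 2 * |y - b|) x s := by
  obtain ⟨s, hl, hr⟩ := h.exists_slopes x
  have hjump : ∑ b ∈ S, ω b / 2 * (if x < b then -1 else 1) =
      ∑ b ∈ S, ω b / 2 * (if x ≤ b then -1 else 1) + ω x := by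
    have hb : ∀ b, ω b / 2 * (if x < b then -1 else 1) =
        ω b / 2 * (if x ≤ b then -1 else 1) + if x = b then ω b else 0 := by
      intro b
      rcases lt_trichotomy x b with hxb | rfl | hxb
      · simp [hxb, hxb.le, hxb.ne]
      · simp only [lt_irrefl, le_refl, if_true, if_false]
        ring
      · simp [not_lt.2 hxb.le, not_le.2 hxb, hxb.ne']
    rw [Finset.sum_congr rfl fun b _ => hb b, Finset.sum_add_distrib, Finset.sum_ite_eq]
    by_cases hxS : x ∈ S
    · rw [if_pos hxS]
    · rw [if_neg hxS, not_not.1 (mt hx hxS)]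
  have hL := hl.sub (.finset_sum (S := S) fun b _ =>
    (eventuallyAffine_abs_sub_nhdsLE b x).const_mul (ω b / 2))
  have hR := hr.sub (.finset_sum (S := S) fun b _ =>
    (eventuallyAffine_abs_sub_nhdsGE b x).const_mul (ω b / 2))
  rw [hjump, add_sub_add_right_eq_sub] at hR
  exact ⟨_, .of_nhdsLE_of_nhdsGE hL hR⟩

theorem jensen (h : TropicalMero f ω) {r : ℝ} (hr : 0 ≤ r) {S : Finset ℝ}
    (hS : ↑S = Function.support ω ∩ Ioo (-r) r) :
    f r + f (-r) = 2 * f 0 + ∑ b ∈ S, ω b * (r - |b|) := by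
  have hmemS : ∀ b, b ∈ S ↔ ω b ≠ 0 ∧ b ∈ Ioo (-r) r := fun b => by
    rw [← Finset.mem_coe, hS]
    rfl
  set V : ℝ → ℝ := fun y => f y - ∑ b ∈ S, ω b / 2 * |y - b| with hVdef
  have hVcont : Continuous V := by
    have := h.cont
    fun_prop
  obtain ⟨c, hc⟩ := exists_affine_of_eventuallyAffine hVcont.continuousOn fun x hx =>
    h.exists_eventuallyAffine_sub_kinks fun hωx => (hmemS x).2 ⟨hωx, hx⟩
  have hV : V r + V (-r) = 2 * V 0 := by
    linarith [hc r ⟨by linarith, le_rfl⟩, hc 0 ⟨by linarith, hr⟩]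
  have hV0 : 2 * V 0 = 2 * f 0 - ∑ b ∈ S, ω b * |0 - b| := by
    rw [hVdef, mul_sub, Finset.mul_sum]
    congr 1
    exact Finset.sum_congr rfl fun b _ => by ring
  have hkink : ∀ b ∈ S, ω b / 2 * |r - b| + ω b / 2 * |-r - b| =
      ω b * (r - |b|) + ω b * |0 - b| := by
    intro b hb
    obtain ⟨-, hb₁, hb₂⟩ := (hmemS b).1 hb
    rw [abs_of_pos (by linarith), abs_of_neg (by linarith), zero_sub, abs_neg]
    ring
  calc f r + f (-r) = V r + V (-r) + ∑ b ∈ S, (ω b / 2 * |r - b| + ω b / 2 * |-r - b|) := by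
        rw [Finset.sum_add_distrib]
        ring
    _ = 2 * V 0 + ∑ b ∈ S, (ω b * (r - |b|) + ω b * |0 - b|) := by
        rw [hV, Finset.sum_congr rfl hkink]
    _ = 2 * f 0 + ∑ b ∈ S, ω b * (r - |b|) := by
        rw [hV0, Finset.sum_add_distrib]
        ring

end TropicalMero

/-- Tropical Jensen formula in characteristic-function form:
`T(r, f) - T(r, -f) = f(0)`. Note that the derivative-jump function of `-f`
is `-ω`. -/
theorem stmt4 (f ω : ℝ → ℝ) (h : TropicalMero f ω) (r : ℝ) (hr : 0 < r) :
    Tfun f ω r - Tfun (fun x => -f x) (fun x => -ω x) r = f 0 := by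
  have hS := (h.discrete r hr).coe_toFinset
  rw [Tfun, Tfun, add_sub_add_comm, mfun_sub_mfun_neg, Nfun_sub_Nfun_neg hS, h.jensen hr.le hS]
  ring
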